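/- Let a_1, …, a_m ∈ 𝔽₂ⁿ be nonzero and linearly independent over 𝔽₂, and let g : 𝔽₂ⁿ → ℝ be supported on {a_1,…,a_m} with |g(a_i)| ≥ 1 for all i. Then ‖g‖_A ≥ √(m/3). -/

import Mathlib

/-!
Write `N = 2ⁿ` and `S = ∑ₓ g(x)²`. Parseval gives `∑ᵣ ĝ(r)² = S / N`, and expanding the fourth
power gives `∑ᵣ ĝ(r)⁴ = E / N³`, where `E = ∑_{x+y=z+w} g(x)g(y)g(z)g(w)`. Linear independence
forces every solution of `x + y = z + w` in the support of `g` to be a pairing of the four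
points, and each of the three pairings contributes at most `S²`, so `E ≤ 3S²`. The interpolation
inequality `‖ĝ‖₂⁶ ≤ ‖ĝ‖₁² ‖ĝ‖₄⁴` then reads `S ≤ 3 ‖g‖_A²`, while `S ≥ m` since `|g(aᵢ)| ≥ 1`.
-/

open scoped Classical
open Finset

noncomputable def ft {n : ℕ} (f : (Fin n → ZMod 2) → ℝ) (r : Fin n → ZMod 2) : ℝ :=
  (∑ x : Fin n → ZMod 2, f x * (-1 : ℝ) ^ (∑ i, r i * x i).val) /
    (Fintype.card (Fin n → ZMod 2))

noncomputable def aNorm {n : ℕ} (f : (Fin n → ZMod 2) → ℝ) : ℝ := ∑ r : Fin n → ZMod 2, |ft f r|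

section Sidon

variable {G : Type*}

/-- Sidon in the characteristic-two sense: the solutions `x = y, z = w` also count as trivial. -/
def IsSidonSet [Add G] (s : Set G) : Prop :=
  ∀ x ∈ s, ∀ y ∈ s, ∀ z ∈ s, ∀ w ∈ s, x + y = z + w →
    (x = z ∧ y = w) ∨ (x = w ∧ y = z) ∨ (x = y ∧ z = w)

lemma IsSidonSet.mono [Add G] {s t : Set G} (ht : IsSidonSet t) (hst : s ⊆ t) : IsSidonSet s :=
  fun x hx y hy z hz w hw => ht x (hst hx) y (hst hy) z (hst hz) w (hst hw)

lemma LinearIndependent.isSidonSet_range {ι R : Type*} [Semiring R] [Nontrivial R]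
    [AddCommMonoid G] [Module R G] {a : ι → G} (ha : LinearIndependent R a) :
    IsSidonSet (Set.range a) := by
  rintro _ ⟨i, rfl⟩ _ ⟨j, rfl⟩ _ ⟨k, rfl⟩ _ ⟨l, rfl⟩ h
  have hsingle := ha (a₁ := Finsupp.single i 1 + Finsupp.single j 1)
    (a₂ := Finsupp.single k 1 + Finsupp.single l 1) (by simpa using h)
  rw [Finsupp.single_add_single_eq_single_add_single one_ne_zero one_ne_zero] at hsingle
  rcases hsingle with ⟨rfl, rfl⟩ | ⟨-, rfl, rfl⟩ | ⟨-, rfl, rfl⟩ <;> simp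

noncomputable def weightedAddEnergy [Fintype G] [Add G] (f : G → ℝ) : ℝ :=
  ∑ p : G × G, ∑ q : G × G,
    if p.1 + p.2 = q.1 + q.2 then f p.1 * f p.2 * (f q.1 * f q.2) else 0

lemma weightedAddEnergy_term_le_of_isSidonSet [Add G] {f : G → ℝ}
    (hf : IsSidonSet (Function.support f)) (p q : G × G) :
    (if p.1 + p.2 = q.1 + q.2 then f p.1 * f p.2 * (f q.1 * f q.2) else 0) ≤
      (if p = q then f p.1 * f p.2 * (f q.1 * f q.2) else 0) +
        (if p.swap = q then f p.1 * f p.2 * (f q.1 * f q.2) else 0) +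
        (if p.1 = p.2 ∧ q.1 = q.2 then f p.1 * f p.2 * (f q.1 * f q.2) else 0) := by
  have h1 : 0 ≤ if p = q then f p.1 * f p.2 * (f q.1 * f q.2) else 0 := by
    split_ifs with h
    · subst h; exact mul_self_nonneg _
    · rfl
  have h2 : 0 ≤ if p.swap = q then f p.1 * f p.2 * (f q.1 * f q.2) else 0 := by
    split_ifs with h
    · subst h
      rw [Prod.fst_swap, Prod.snd_swap, mul_comm (f p.2)]
      exact mul_self_nonneg _
    · rfl
  have h3 : 0 ≤ if p.1 = p.2 ∧ q.1 = q.2 then f p.1 * f p.2 * (f q.1 * f q.2) else 0 := by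
    split_ifs with h
    · rw [h.1, h.2]; exact mul_nonneg (mul_self_nonneg _) (mul_self_nonneg _)
    · rfl
  by_cases hE : p.1 + p.2 = q.1 + q.2
  swap
  · rw [if_neg hE]; linarith
  rw [if_pos hE]
  by_cases hF : f p.1 * f p.2 * (f q.1 * f q.2) = 0
  · linarith
  simp only [mul_ne_zero_iff] at hF
  obtain ⟨⟨hx, hy⟩, hz, hw⟩ := hF
  rcases hf _ hx _ hy _ hz _ hw hE with h | h | h
  · rw [if_pos (show p = q from Prod.ext h.1 h.2)]; linarith
  · rw [if_pos (show p.swap = q from Prod.ext h.2 h.1)]; linarith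
  · rw [if_pos h]; linarith

lemma weightedAddEnergy_le_of_isSidonSet [Fintype G] [Add G] {f : G → ℝ}
    (hf : IsSidonSet (Function.support f)) :
    weightedAddEnergy f ≤ 3 * (∑ x, f x ^ 2) ^ 2 := by
  have hsq : ∑ p : G × G, (f p.1 * f p.2) ^ 2 = (∑ x, f x ^ 2) ^ 2 := by
    simp only [Fintype.sum_prod_type, mul_pow, sq (∑ x, f x ^ 2), sum_mul_sum]
  have hdiag : ∑ p : G × G, ∑ q : G × G,
      (if p = q then f p.1 * f p.2 * (f q.1 * f q.2) else 0) = (∑ x, f x ^ 2) ^ 2 := by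
    simp only [sum_ite_eq, mem_univ, if_true, ← hsq]
    exact sum_congr rfl fun p _ => by ring
  have hswap : ∑ p : G × G, ∑ q : G × G,
      (if p.swap = q then f p.1 * f p.2 * (f q.1 * f q.2) else 0) = (∑ x, f x ^ 2) ^ 2 := by
    simp only [sum_ite_eq, mem_univ, if_true, Prod.fst_swap, Prod.snd_swap, ← hsq]
    exact sum_congr rfl fun p _ => by ring
  have hcross : ∑ p : G × G, ∑ q : G × G,
      (if p.1 = p.2 ∧ q.1 = q.2 then f p.1 * f p.2 * (f q.1 * f q.2) else 0) =
        (∑ x, f x ^ 2) ^ 2 := by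
    have hpairs : ∑ p : G × G, (if p.1 = p.2 then f p.1 * f p.2 else 0) = ∑ x, f x ^ 2 := by
      simp only [Fintype.sum_prod_type, sum_ite_eq, mem_univ, if_true, sq]
    rw [← hpairs, sq, sum_mul_sum]
    simp only [ite_zero_mul_ite_zero]
  calc weightedAddEnergy f
      ≤ ∑ p : G × G, ∑ q : G × G,
          ((if p = q then f p.1 * f p.2 * (f q.1 * f q.2) else 0) +
            (if p.swap = q then f p.1 * f p.2 * (f q.1 * f q.2) else 0) +
            (if p.1 = p.2 ∧ q.1 = q.2 then f p.1 * f p.2 * (f q.1 * f q.2) else 0)) :=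
        sum_le_sum fun p _ => sum_le_sum fun q _ => weightedAddEnergy_term_le_of_isSidonSet hf p q
    _ = 3 * (∑ x, f x ^ 2) ^ 2 := by
        simp only [sum_add_distrib, hdiag, hswap, hcross]; ring

end Sidon

section Walsh

lemma neg_one_pow_zmod_two_val_add (s t : ZMod 2) :
    (-1 : ℝ) ^ (s + t).val = (-1) ^ s.val * (-1) ^ t.val := by
  rw [ZMod.val_add, ← neg_one_pow_eq_pow_mod_two, pow_add]

variable {n : ℕ}

noncomputable def walsh (r x : Fin n → ZMod 2) : ℝ := (-1) ^ (r ⬝ᵥ x).val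

lemma walsh_add_right (r x y : Fin n → ZMod 2) : walsh r (x + y) = walsh r x * walsh r y := by
  simp only [walsh, dotProduct_add, neg_one_pow_zmod_two_val_add]

lemma walsh_add_left (r s x : Fin n → ZMod 2) : walsh (r + s) x = walsh r x * walsh s x := by
  simp only [walsh, add_dotProduct, neg_one_pow_zmod_two_val_add]

lemma sum_walsh (v : Fin n → ZMod 2) :
    ∑ r, walsh r v = if v = 0 then (Fintype.card (Fin n → ZMod 2) : ℝ) else 0 := by
  split_ifs with hv
  · simp [hv, walsh, Finset.card_univ]
  obtain ⟨j, hj⟩ : ∃ j, v j ≠ 0 := Function.ne_iff.mp hv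
  have hflip : walsh (Pi.single j 1) v = -1 := by
    have hvj : v j = 1 := (by decide : ∀ t : ZMod 2, t ≠ 0 → t = 1) _ hj
    simp [walsh, hvj, ZMod.val_one]
  have hshift : ∑ r, walsh r v = ∑ r, walsh (r + Pi.single j 1) v :=
    (Fintype.sum_equiv (Equiv.addRight (Pi.single j 1)) _ _ fun _ => rfl).symm
  simp only [walsh_add_left, hflip, mul_neg_one, sum_neg_distrib] at hshift
  linarith

lemma zmod_two_pi_add_eq_zero_iff {x y : Fin n → ZMod 2} : x + y = 0 ↔ x = y := by
  rw [add_eq_zero_iff_eq_neg, show -y = y from funext fun i => ZMod.neg_eq_self_mod_two (y i)]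

lemma ft_eq_sum_mul_walsh (f : (Fin n → ZMod 2) → ℝ) (r : Fin n → ZMod 2) :
    ft f r = (∑ x, f x * walsh r x) / Fintype.card (Fin n → ZMod 2) := rfl

lemma sq_sum_mul_walsh {ι : Type*} [Fintype ι] (c : ι → ℝ) (v : ι → Fin n → ZMod 2)
    (r : Fin n → ZMod 2) :
    (∑ i, c i * walsh r (v i)) ^ 2 = ∑ p : ι × ι, c p.1 * c p.2 * walsh r (v p.1 + v p.2) := by
  rw [sq, sum_mul_sum, Fintype.sum_prod_type]
  simp only [walsh_add_right]
  exact sum_congr rfl fun i _ => sum_congr rfl fun j _ => by ring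

lemma sum_sq_sum_mul_walsh {ι : Type*} [Fintype ι] (c : ι → ℝ) (v : ι → Fin n → ZMod 2) :
    ∑ r, (∑ i, c i * walsh r (v i)) ^ 2 =
      Fintype.card (Fin n → ZMod 2) * ∑ p : ι × ι, if v p.1 = v p.2 then c p.1 * c p.2 else 0 := by
  simp only [sq_sum_mul_walsh]
  rw [sum_comm, mul_sum]
  refine Fintype.sum_congr _ _ fun p => ?_
  simp only [← mul_sum, sum_walsh, zmod_two_pi_add_eq_zero_iff]
  split_ifs <;> ring

end Walsh

lemma sum_sq_pow_three_le_sq_sum_abs_mul_sum_pow_four {ι : Type*} (s : Finset ι) (f : ι → ℝ) :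
    (∑ i ∈ s, f i ^ 2) ^ 3 ≤ (∑ i ∈ s, |f i|) ^ 2 * ∑ i ∈ s, f i ^ 4 := by
  have h13 : (∑ i ∈ s, f i ^ 2) ^ 2 ≤ (∑ i ∈ s, |f i|) * ∑ i ∈ s, |f i| ^ 3 :=
    sum_sq_le_sum_mul_sum_of_sq_le_mul s (fun i _ => abs_nonneg _) (fun i _ => by positivity)
      fun i _ => le_of_eq (by rw [show |f i| * |f i| ^ 3 = (|f i| ^ 2) ^ 2 by ring, sq_abs])
  have h24 : (∑ i ∈ s, |f i| ^ 3) ^ 2 ≤ (∑ i ∈ s, f i ^ 2) * ∑ i ∈ s, f i ^ 4 :=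
    sum_sq_le_sum_mul_sum_of_sq_le_mul s (fun i _ => by positivity) (fun i _ => by positivity)
      fun i _ => le_of_eq (by
        rw [show (|f i| ^ 3) ^ 2 = |f i| ^ 2 * (|f i| ^ 2) ^ 2 by ring, sq_abs]; ring)
  have h2 : 0 ≤ ∑ i ∈ s, f i ^ 2 := sum_nonneg fun i _ => sq_nonneg _
  rcases h2.eq_or_lt with h0 | hpos
  · rw [← h0, zero_pow three_ne_zero]; positivity
  refine le_of_mul_le_mul_right ?_ hpos
  calc (∑ i ∈ s, f i ^ 2) ^ 3 * ∑ i ∈ s, f i ^ 2 = ((∑ i ∈ s, f i ^ 2) ^ 2) ^ 2 := by ring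
    _ ≤ ((∑ i ∈ s, |f i|) * ∑ i ∈ s, |f i| ^ 3) ^ 2 := pow_le_pow_left₀ (by positivity) h13 2
    _ = (∑ i ∈ s, |f i|) ^ 2 * (∑ i ∈ s, |f i| ^ 3) ^ 2 := by ring
    _ ≤ (∑ i ∈ s, |f i|) ^ 2 * ((∑ i ∈ s, f i ^ 2) * ∑ i ∈ s, f i ^ 4) := by gcongr
    _ = (∑ i ∈ s, |f i|) ^ 2 * (∑ i ∈ s, f i ^ 4) * ∑ i ∈ s, f i ^ 2 := by ring

section Fourier

variable {n : ℕ}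

lemma sum_ft_sq (f : (Fin n → ZMod 2) → ℝ) :
    ∑ r, ft f r ^ 2 = (∑ x, f x ^ 2) / Fintype.card (Fin n → ZMod 2) := by
  have hN : (Fintype.card (Fin n → ZMod 2) : ℝ) ≠ 0 := by positivity
  simp only [ft_eq_sum_mul_walsh, div_pow, ← sum_div]
  have h := sum_sq_sum_mul_walsh f id
  simp only [id] at h
  rw [h, Fintype.sum_prod_type]
  simp only [sum_ite_eq, mem_univ, if_true, ← sq]
  field_simp

lemma sum_ft_pow_four (f : (Fin n → ZMod 2) → ℝ) :
    ∑ r, ft f r ^ 4 = weightedAddEnergy f / Fintype.card (Fin n → ZMod 2) ^ 3 := by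
  have hN : (Fintype.card (Fin n → ZMod 2) : ℝ) ≠ 0 := by positivity
  have hsq := sq_sum_mul_walsh f id
  simp only [id] at hsq
  have h := sum_sq_sum_mul_walsh (fun p : (Fin n → ZMod 2) × (Fin n → ZMod 2) => f p.1 * f p.2)
    (fun p => p.1 + p.2)
  simp only [ft_eq_sum_mul_walsh, div_pow, ← sum_div, show ∀ y : ℝ, y ^ 4 = (y ^ 2) ^ 2 by
    intro y; ring, hsq]
  rw [h, weightedAddEnergy, ← Fintype.sum_prod_type']
  field_simp

lemma sum_sq_le_three_mul_aNorm_sq {f : (Fin n → ZMod 2) → ℝ}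
    (hf : IsSidonSet (Function.support f)) : ∑ x, f x ^ 2 ≤ 3 * aNorm f ^ 2 := by
  set N : ℝ := (Fintype.card (Fin n → ZMod 2) : ℝ)
  set S := ∑ x, f x ^ 2
  have h4 : ∑ r, ft f r ^ 4 ≤ 3 * S ^ 2 / N ^ 3 := by
    rw [sum_ft_pow_four]
    gcongr
    exact weightedAddEnergy_le_of_isSidonSet hf
  have hS : S ^ 3 ≤ 3 * aNorm f ^ 2 * S ^ 2 := by
    have h := (sum_sq_pow_three_le_sq_sum_abs_mul_sum_pow_four univ (ft f)).trans
      (mul_le_mul_of_nonneg_left h4 (sq_nonneg _))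
    rw [sum_ft_sq, div_pow, ← mul_div_assoc, div_le_div_iff_of_pos_right (by positivity)] at h
    rw [aNorm]
    linarith
  by_contra! hlt
  have hpos : 0 < S := lt_of_le_of_lt (by positivity) hlt
  nlinarith [mul_lt_mul_of_pos_right hlt (pow_pos hpos 2)]

end Fourier

theorem independent_support_large_aNorm_general {n m : ℕ} (a : Fin m → (Fin n → ZMod 2))
    (hind : LinearIndependent (ZMod 2) a)
    (g : (Fin n → ZMod 2) → ℝ)
    (hsupp : ∀ x, x ∉ Set.range a → g x = 0)
    (hbig : ∀ i, 1 ≤ |g (a i)|) :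
    Real.sqrt (m / 3) ≤ aNorm g := by
  have hsidon : IsSidonSet (Function.support g) :=
    hind.isSidonSet_range.mono fun x hx => not_imp_comm.mp (hsupp x) hx
  have hm : (m : ℝ) ≤ ∑ x, g x ^ 2 :=
    calc (m : ℝ) = ∑ _i : Fin m, 1 := by simp
      _ ≤ ∑ i, g (a i) ^ 2 := sum_le_sum fun i _ => (one_le_sq_iff_one_le_abs _).mpr (hbig i)
      _ = ∑ x, g x ^ 2 := Fintype.sum_of_injective a hind.injective _ _
        (fun x hx => by simp [hsupp x hx]) fun _ => rfl
  have hA := sum_sq_le_three_mul_aNorm_sq hsidon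
  exact Real.sqrt_le_iff.mpr ⟨sum_nonneg fun r _ => abs_nonneg _, by linarith⟩

theorem independent_support_large_aNorm {n m : ℕ} (a : Fin m → (Fin n → ZMod 2))
    (hne : ∀ i, a i ≠ 0) (hind : LinearIndependent (ZMod 2) a)
    (g : (Fin n → ZMod 2) → ℝ)
    (hsupp : ∀ x, x ∉ Set.range a → g x = 0)
    (hbig : ∀ i, 1 ≤ |g (a i)|) :
    Real.sqrt (m / 3) ≤ aNorm g :=
  independent_support_large_aNorm_general a hind g hsupp hbig
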